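/- The rotation compressor C_{H,Y}(X) := H + Q C(Qᵀ(X−H)Q)Qᵀ, where Q is an orthogonal d×d matrix and C is a contractive compressor with parameter α ∈ (0,1], is a 3PC compressor with A = α/2 and B = (1−α)(2−α)/α; that is, E‖C_{H,Y}(X) − X‖²_F ≤ (1 − α/2)‖Y−H‖²_F + (1−α)((2−α)/α)‖Y−X‖²_F for all H, Y, X ∈ ℝ^{d×d}. -/
import Mathlib


open Matrix Finset

/-- Squared Frobenius norm of a real `d × d` matrix. -/
def frobSq {d : ℕ} (X : Matrix (Fin d) (Fin d) ℝ) : ℝ := ∑ j, ∑ l, (X j l)^2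

lemma frobSq_eq_trace {d : ℕ} (A : Matrix (Fin d) (Fin d) ℝ) :
    frobSq A = Matrix.trace (Aᵀ * A) := by
  simp only [frobSq, Matrix.trace, Matrix.diag, Matrix.mul_apply, Matrix.transpose_apply, sq]
  rw [Finset.sum_comm]

lemma frobSq_conj {d : ℕ} (Q : Matrix (Fin d) (Fin d) ℝ) (hQ : Qᵀ * Q = 1)
    (A : Matrix (Fin d) (Fin d) ℝ) : frobSq (Q * A * Qᵀ) = frobSq A := by
  rw [frobSq_eq_trace, frobSq_eq_trace]
  have htr : (Q * A * Qᵀ)ᵀ = Q * Aᵀ * Qᵀ := by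
    simp [Matrix.transpose_mul, Matrix.mul_assoc]
  have : (Q * A * Qᵀ)ᵀ * (Q * A * Qᵀ) = Q * (Aᵀ * A) * Qᵀ := by
    rw [htr]
    have h2 : Q * Aᵀ * Qᵀ * (Q * A * Qᵀ) = Q * Aᵀ * (Qᵀ * Q) * (A * Qᵀ) := by noncomm_ring
    rw [h2, hQ]
    noncomm_ring
  rw [this, Matrix.trace_mul_cycle, ← Matrix.mul_assoc, hQ, Matrix.one_mul]

lemma frobSq_nonneg {d : ℕ} (A : Matrix (Fin d) (Fin d) ℝ) : 0 ≤ frobSq A := by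
  refine Finset.sum_nonneg fun _ _ => Finset.sum_nonneg fun _ _ => sq_nonneg _

lemma frobSq_young {d : ℕ} (t : ℝ) (ht : 0 < t) (U V : Matrix (Fin d) (Fin d) ℝ) :
    frobSq (U + V) ≤ (1 + t) * frobSq U + (1 + 1/t) * frobSq V := by
  have hts : t * (1/t) = 1 := mul_one_div_cancel ht.ne'
  have hs : 0 ≤ 1/t := by positivity
  have key : ∀ u v : ℝ, (u + v)^2 ≤ (1 + t) * u^2 + (1 + 1/t) * v^2 := by
    intro u v
    nlinarith [sq_nonneg (t * u - v), ht.le, mul_pos ht ht, sq_nonneg (u - v), sq_nonneg u, sq_nonneg v]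
  calc frobSq (U + V) = ∑ j, ∑ l, (U j l + V j l)^2 := by simp [frobSq]
    _ ≤ ∑ j, ∑ l, ((1 + t) * (U j l)^2 + (1 + 1/t) * (V j l)^2) := by
        refine Finset.sum_le_sum fun j _ => Finset.sum_le_sum fun l _ => key _ _
    _ = (1 + t) * frobSq U + (1 + 1/t) * frobSq V := by
        simp [frobSq, Finset.sum_add_distrib, Finset.mul_sum]

/-- The rotation compressor `C_{H,Y}(X) = H + Q C(Qᵀ(X−H)Q) Qᵀ`, for an orthogonal
matrix `Q` and a contractive compressor `C` with parameter `α ∈ (0,1]`, is a 3PC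
compressor with `A = α/2` and `B = (1−α)(2−α)/α`. -/
theorem rotation_compressor_is_3PC {d : ℕ} (α : ℝ) (hα0 : 0 < α) (hα1 : α ≤ 1)
    (Q : Matrix (Fin d) (Fin d) ℝ) (hQ : Qᵀ * Q = 1) (hQ' : Q * Qᵀ = 1)
    (C : Matrix (Fin d) (Fin d) ℝ → Matrix (Fin d) (Fin d) ℝ)
    (hC : ∀ M, frobSq (C M - M) ≤ (1 - α) * frobSq M)
    (H Y X : Matrix (Fin d) (Fin d) ℝ) :
    frobSq (H + Q * C (Qᵀ * (X - H) * Q) * Qᵀ - X) ≤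
      (1 - α/2) * frobSq (Y - H) + (1 - α) * ((2 - α)/α) * frobSq (Y - X) := by
  set M := Qᵀ * (X - H) * Q with hM
  have hQMQ : Q * M * Qᵀ = X - H := by
    rw [hM]
    calc Q * (Qᵀ * (X - H) * Q) * Qᵀ = (Q * Qᵀ) * (X - H) * (Q * Qᵀ) := by noncomm_ring
      _ = X - H := by rw [hQ']; simp
  have key : H + Q * C M * Qᵀ - X = Q * (C M - M) * Qᵀ := by
    have : Q * (C M - M) * Qᵀ = Q * C M * Qᵀ - Q * M * Qᵀ := by noncomm_ring
    rw [this, hQMQ]; abel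
  rw [key, frobSq_conj Q hQ]
  have h1 : frobSq (C M - M) ≤ (1 - α) * frobSq M := hC M
  have h2 : frobSq M = frobSq (X - H) := by
    have : M = Qᵀ * (X - H) * Qᵀᵀ := by rw [hM, Matrix.transpose_transpose]
    rw [this, frobSq_conj Qᵀ (by rwa [Matrix.transpose_transpose])]
  rw [h2] at h1
  -- split ‖X − H‖²
  rcases eq_or_lt_of_le hα1 with rfl | hαlt
  · simp only [sub_self, zero_mul] at h1 ⊢
    have := frobSq_nonneg (Y - H)
    have := frobSq_nonneg (Y - X)
    nlinarith
  · have h1α : 0 < 1 - α := by linarith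
    set t : ℝ := α / (2 * (1 - α)) with htdef
    have ht : 0 < t := by positivity
    have hsplit : X - H = (Y - H) + -(Y - X) := by abel
    have hy := frobSq_young t ht (Y - H) (-(Y - X))
    rw [← hsplit] at hy
    have hneg : frobSq (-(Y - X)) = frobSq (Y - X) := by
      simp only [frobSq, Matrix.neg_apply, Matrix.sub_apply, neg_sub]
      exact Finset.sum_congr rfl fun j _ => Finset.sum_congr rfl fun l _ => by ring
    rw [hneg] at hy
    have e1 : (1 - α) * (1 + t) = 1 - α / 2 := by
      rw [htdef]; field_simp; ring
    have e2 : (1 - α) * (1 + 1/t) = (1 - α) * ((2 - α) / α) := by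
      have : 1 + 1/t = (2 - α) / α := by
        rw [htdef, one_div_div]
        field_simp
        ring
      rw [this]
    calc frobSq (C M - M) ≤ (1 - α) * frobSq (X - H) := h1
      _ ≤ (1 - α) * ((1 + t) * frobSq (Y - H) + (1 + 1/t) * frobSq (Y - X)) := by
          exact mul_le_mul_of_nonneg_left hy h1α.le
      _ = (1 - α/2) * frobSq (Y - H) + (1 - α) * ((2 - α)/α) * frobSq (Y - X) := by
          rw [mul_add, ← mul_assoc, ← mul_assoc, e1, e2]
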